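/- arXiv:2110.13997 — 2 statements merged into one kernel-verified Lean document; each statement's English description precedes it below -/
import Mathlib

section
/- Let L be a primitive rank-2 sublattice of ℤ⁴ with ℤ-basis (u,v), and write u∧v = (a,b,c,d,e,f). Then the orthogonal complement L⊥ = {w ∈ ℤ⁴ : w·u = 0 and w·v = 0} is a free abelian group of rank 2, and for any ℤ-basis (u′,v′) of L⊥ one has u′∧v′ = (f,−e,d,c,−b,a) or u′∧v′ = −(f,−e,d,c,−b,a). -/
/-- The dot product on `ℤ⁴`. -/
def dot4 (u v : Fin 4 → ℤ) : ℤ :=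
  u 0 * v 0 + u 1 * v 1 + u 2 * v 2 + u 3 * v 3

/-- The vector of `2 × 2` minors of the pair `(u, v)` of vectors in `ℤ⁴`. -/
def wedge (u v : Fin 4 → ℤ) : Fin 6 → ℤ :=
  ![u 0 * v 1 - u 1 * v 0, u 0 * v 2 - u 2 * v 0, u 0 * v 3 - u 3 * v 0,
    u 1 * v 2 - u 2 * v 1, u 1 * v 3 - u 3 * v 1, u 2 * v 3 - u 3 * v 2]

/-- `(u, v)` is a `ℤ`-basis of the subgroup `L` of `ℤ⁴`. -/
def IsBasisPair (L : Submodule ℤ (Fin 4 → ℤ)) (u v : Fin 4 → ℤ) : Prop :=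
  LinearIndependent ℤ ![u, v] ∧ Submodule.span ℤ ({u, v} : Set (Fin 4 → ℤ)) = L

/-- `L` is primitive: `(ℚ·L) ∩ ℤ⁴ = L`, equivalently `ℤ⁴/L` is torsion-free. -/
def IsSaturated (L : Submodule ℤ (Fin 4 → ℤ)) : Prop :=
  ∀ (n : ℤ) (x : Fin 4 → ℤ), n ≠ 0 → n • x ∈ L → x ∈ L

/-- The orthogonal complement `{w ∈ ℤ⁴ : w·u = 0 ∧ w·v = 0}` of the lattice
spanned by `u` and `v`. -/
def perp4 (u v : Fin 4 → ℤ) : Submodule ℤ (Fin 4 → ℤ) where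
  carrier := {w | dot4 w u = 0 ∧ dot4 w v = 0}
  add_mem' := by
    rintro a b ⟨ha1, ha2⟩ ⟨hb1, hb2⟩
    refine ⟨?_, ?_⟩ <;> simp only [dot4, Pi.add_apply] at *
    · linear_combination ha1 + hb1
    · linear_combination ha2 + hb2
  zero_mem' := by simp [dot4]
  smul_mem' := by
    rintro c a ⟨ha1, ha2⟩
    refine ⟨?_, ?_⟩ <;> simp only [dot4, Pi.smul_apply, smul_eq_mul] at *
    · linear_combination c * ha1
    · linear_combination c * ha2

/-- The operation `(a,b,c,d,e,f) ↦ (f,−e,d,c,−b,a)` on `ℤ⁶`. -/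
def rev6 (w : Fin 6 → ℤ) : Fin 6 → ℤ :=
  ![w 5, -(w 4), w 3, w 2, -(w 1), w 0]

open Module Submodule Matrix in
lemma exists_wedge_combo (L : Submodule ℤ (Fin 4 → ℤ)) (u v : Fin 4 → ℤ)
    (hb : IsBasisPair L u v) (hs : IsSaturated L) :
    ∃ c : Fin 6 → ℤ, ∑ i, c i * wedge u v i = 1 := by
  obtain ⟨hli, hspan⟩ := hb
  have hrange : Set.range ![u, v] = ({u, v} : Set (Fin 4 → ℤ)) := by
    simp [Matrix.range_cons, Matrix.range_empty, Set.pair_comm]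
  haveI : NoZeroSMulDivisors ℤ ((Fin 4 → ℤ) ⧸ L) := by
    refine ⟨fun {n x} h => ?_⟩
    by_cases hn : n = 0
    · exact Or.inl hn
    · obtain ⟨y, rfl⟩ := Submodule.mkQ_surjective L x
      refine Or.inr ?_
      have h' : n • y ∈ L := by
        rwa [← Submodule.Quotient.mk_eq_zero, Submodule.Quotient.mk_smul]
      simpa [Submodule.Quotient.mk_eq_zero] using hs n y hn h'
  have hNL : Submodule.span ℤ (Set.range ![u, v]) = L := by rw [hrange, hspan]
  let bL : Basis (Fin 2) ℤ L := (Basis.span hli).map (LinearEquiv.ofEq _ _ hNL)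
  have hrkL : Module.rank ℤ L = 2 := by rw [← bL.mk_eq_rank'']; simp
  have hrkQ : Module.rank ℤ ((Fin 4 → ℤ) ⧸ L) = 2 := by
    have h := Submodule.rank_quotient_add_rank L
    rw [hrkL, rank_fin_fun] at h
    have h4 : ((4:ℕ) : Cardinal) = 2 + 2 := by norm_num
    rw [h4] at h
    exact Cardinal.eq_of_add_eq_add_right h (by exact_mod_cast Cardinal.nat_lt_aleph0 2)
  have hfrQ : Module.finrank ℤ ((Fin 4 → ℤ) ⧸ L) = 2 := by
    have := Module.finrank_eq_rank ℤ ((Fin 4 → ℤ) ⧸ L)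
    rw [hrkQ] at this
    exact_mod_cast this
  let bQ : Basis (Fin 2) ℤ ((Fin 4 → ℤ) ⧸ L) := Module.finBasisOfFinrankEq ℤ _ hfrQ
  obtain ⟨s, hsec⟩ := Module.projective_lifting_property L.mkQ LinearMap.id
    (Submodule.mkQ_surjective L)
  have hls : ∀ q : (Fin 4 → ℤ) ⧸ L, L.mkQ (s q) = q := fun q => by
    have := LinearMap.congr_fun hsec q; simpa using this
  set w1 := s (bQ 0) with hw1
  set w2 := s (bQ 1) with hw2
  have hspan4 : Submodule.span ℤ ({u, v, w1, w2} : Set (Fin 4 → ℤ)) = ⊤ := by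
    rw [eq_top_iff]
    intro x _
    have hmem1 : x - s (L.mkQ x) ∈ L := by
      have hz : L.mkQ (x - s (L.mkQ x)) = 0 := by rw [map_sub, hls]; simp
      rwa [Submodule.mkQ_apply, Submodule.Quotient.mk_eq_zero] at hz
    have hsub : L ≤ Submodule.span ℤ ({u, v, w1, w2} : Set (Fin 4 → ℤ)) := by
      rw [← hspan]
      apply Submodule.span_mono
      intro z hz; simp at hz ⊢; tauto
    have hs2 : s (L.mkQ x) ∈ Submodule.span ℤ ({u, v, w1, w2} : Set (Fin 4 → ℤ)) := by
      have heq : s (L.mkQ x) = bQ.repr (L.mkQ x) 0 • w1 + bQ.repr (L.mkQ x) 1 • w2 := by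
        conv_lhs => rw [← bQ.sum_repr (L.mkQ x)]
        rw [Fin.sum_univ_two, map_add, _root_.map_smul, _root_.map_smul]
      rw [heq]
      exact add_mem (smul_mem _ _ (subset_span (by simp))) (smul_mem _ _ (subset_span (by simp)))
    have hx : x = (x - s (L.mkQ x)) + s (L.mkQ x) := by abel
    rw [hx]
    exact add_mem (hsub hmem1) hs2
  set M : Matrix (Fin 4) (Fin 4) ℤ := (Matrix.of ![u, v, w1, w2])ᵀ with hM
  have hrg : LinearMap.range M.mulVecLin = ⊤ := by
    rw [Matrix.range_mulVecLin, hM]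
    change Submodule.span ℤ (Set.range (Matrix.of ![u, v, w1, w2])) = ⊤
    have hr : Set.range (Matrix.of ![u, v, w1, w2]) = ({u, v, w1, w2} : Set (Fin 4 → ℤ)) := by
      show Set.range ![u, v, w1, w2] = _
      ext z
      simp [Matrix.range_cons, Matrix.range_empty]
      tauto
    rw [hr, hspan4]
  have hsurj : Function.Surjective M.mulVecLin := LinearMap.range_eq_top.1 hrg
  choose ninv hninv using hsurj
  set N : Matrix (Fin 4) (Fin 4) ℤ := Matrix.of (fun i j => ninv (Pi.single j 1) i) with hN
  have hMN : M * N = 1 := by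
    ext i j
    have h1 := congrFun (hninv (Pi.single j 1)) i
    simp only [Matrix.mulVecLin_apply, Matrix.mulVec, dotProduct] at h1
    rw [Matrix.mul_apply]
    simp only [hN, Matrix.of_apply]
    rw [h1, Matrix.one_apply, Pi.single_apply]
  have hdet1 : M.det * N.det = 1 := by rw [← Matrix.det_mul, hMN, Matrix.det_one]
  have hdetM' : M.det = (u 0 * v 1 - u 1 * v 0) * (w1 2 * w2 3 - w1 3 * w2 2) - (u 0 * v 2 - u 2 * v 0) * (w1 1 * w2 3 - w1 3 * w2 1) + (u 0 * v 3 - u 3 * v 0) * (w1 1 * w2 2 - w1 2 * w2 1) + (u 1 * v 2 - u 2 * v 1) * (w1 0 * w2 3 - w1 3 * w2 0) - (u 1 * v 3 - u 3 * v 1) * (w1 0 * w2 2 - w1 2 * w2 0) + (u 2 * v 3 - u 3 * v 2) * (w1 0 * w2 1 - w1 1 * w2 0) := by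
    have hM4 : M = !![u 0, v 0, w1 0, w2 0; u 1, v 1, w1 1, w2 1;
        u 2, v 2, w1 2, w2 2; u 3, v 3, w1 3, w2 3] := by
      ext i j
      fin_cases i <;> fin_cases j <;> rfl
    rw [hM4]
    simp [Matrix.det_succ_row_zero, Fin.sum_univ_succ, Fin.succAbove, Fin.lt_def,
      Fin.castSucc, Fin.castAdd, Fin.castLE, -Fin.val_fin_lt, -Fin.lt_def]
    ring
  have hdetM : M.det =
      wedge u v 0 * wedge w1 w2 5 - wedge u v 1 * wedge w1 w2 4 +
      wedge u v 2 * wedge w1 w2 3 + wedge u v 3 * wedge w1 w2 2 -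
      wedge u v 4 * wedge w1 w2 1 + wedge u v 5 * wedge w1 w2 0 := hdetM'
  refine ⟨![N.det * wedge w1 w2 5, -(N.det * wedge w1 w2 4), N.det * wedge w1 w2 3,
    N.det * wedge w1 w2 2, -(N.det * wedge w1 w2 1), N.det * wedge w1 w2 0], ?_⟩
  rw [Fin.sum_univ_six]
  show N.det * wedge w1 w2 5 * wedge u v 0 + -(N.det * wedge w1 w2 4) * wedge u v 1 +
    N.det * wedge w1 w2 3 * wedge u v 2 + N.det * wedge w1 w2 2 * wedge u v 3 +
    -(N.det * wedge w1 w2 1) * wedge u v 4 + N.det * wedge w1 w2 0 * wedge u v 5 = 1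
  linear_combination hdet1 - N.det * hdetM
lemma perp4_saturated (u v : Fin 4 → ℤ) : IsSaturated (perp4 u v) := by
  intro n x hn hx
  obtain ⟨h1, h2⟩ := hx
  have e1 : dot4 (n • x) u = n * dot4 x u := by simp [dot4]; ring
  have e2 : dot4 (n • x) v = n * dot4 x v := by simp [dot4]; ring
  rw [e1] at h1; rw [e2] at h2
  constructor
  · have := mul_eq_zero.1 h1
    tauto
  · have := mul_eq_zero.1 h2
    tauto

lemma perp4_basis (u v : Fin 4 → ℤ) (hw : wedge u v ≠ 0) :
    Nonempty (Module.Basis (Fin 2) ℤ (perp4 u v)) := by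
  let f : (Fin 4 → ℤ) →ₗ[ℤ] (Fin 2 → ℤ) :=
    { toFun := fun w => ![dot4 w u, dot4 w v]
      map_add' := by intro a b; funext i; fin_cases i <;> · simp [dot4]; ring
      map_smul' := by intro m a; funext i; fin_cases i <;> · simp [dot4]; ring }
  have hker : LinearMap.ker f = perp4 u v := by
    ext w
    constructor
    · intro h
      rw [LinearMap.mem_ker] at h
      exact ⟨by simpa [f] using congrFun h 0, by simpa [f] using congrFun h 1⟩
    · rintro ⟨h1, h2⟩
      rw [LinearMap.mem_ker]
      funext i
      fin_cases i
      · simpa [f] using h1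
      · simpa [f] using h2
  have hG : dot4 u u * dot4 v v - dot4 u v * dot4 v u = ∑ i, wedge u v i ^ 2 := by
    rw [Fin.sum_univ_six]
    show dot4 u u * dot4 v v - dot4 u v * dot4 v u =
      (u 0 * v 1 - u 1 * v 0) ^ 2 + (u 0 * v 2 - u 2 * v 0) ^ 2 + (u 0 * v 3 - u 3 * v 0) ^ 2 +
      (u 1 * v 2 - u 2 * v 1) ^ 2 + (u 1 * v 3 - u 3 * v 1) ^ 2 + (u 2 * v 3 - u 3 * v 2) ^ 2
    show (u 0 * u 0 + u 1 * u 1 + u 2 * u 2 + u 3 * u 3) *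
        (v 0 * v 0 + v 1 * v 1 + v 2 * v 2 + v 3 * v 3) -
        (u 0 * v 0 + u 1 * v 1 + u 2 * v 2 + u 3 * v 3) *
        (v 0 * u 0 + v 1 * u 1 + v 2 * u 2 + v 3 * u 3) = _
    ring
  have hGne : dot4 u u * dot4 v v - dot4 u v * dot4 v u ≠ 0 := by
    obtain ⟨j, hj⟩ := Function.ne_iff.1 hw
    have hpos : 0 < ∑ i, wedge u v i ^ 2 := by
      refine Finset.sum_pos' (fun i _ => sq_nonneg _) ⟨j, Finset.mem_univ j, ?_⟩
      exact lt_of_le_of_ne (sq_nonneg _) (Ne.symm (pow_ne_zero _ (by simpa using hj)))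
    rw [hG]
    exact ne_of_gt hpos
  have hli2 : LinearIndependent ℤ ![f u, f v] := by
    rw [LinearIndependent.pair_iff]
    intro s t hst
    have h0 : s * dot4 u u + t * dot4 v u = 0 := by simpa [f] using congrFun hst 0
    have h1 : s * dot4 u v + t * dot4 v v = 0 := by simpa [f] using congrFun hst 1
    constructor
    · have : s * (dot4 u u * dot4 v v - dot4 u v * dot4 v u) = 0 := by
        linear_combination dot4 v v * h0 - dot4 v u * h1
      rcases mul_eq_zero.1 this with h | h
      · exact h
      · exact absurd h hGne
    · have : t * (dot4 u u * dot4 v v - dot4 u v * dot4 v u) = 0 := by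
        linear_combination dot4 u u * h1 - dot4 u v * h0
      rcases mul_eq_zero.1 this with h | h
      · exact h
      · exact absurd h hGne
  have hrr : Module.rank ℤ (LinearMap.range f) = 2 := by
    refine le_antisymm (le_trans (Submodule.rank_le _) (by rw [rank_fin_fun]; norm_num)) ?_
    have hg : LinearIndependent ℤ
        (![⟨f u, LinearMap.mem_range_self f u⟩, ⟨f v, LinearMap.mem_range_self f v⟩] :
          Fin 2 → LinearMap.range f) := by
      apply LinearIndependent.of_comp (LinearMap.range f).subtype
      have : (LinearMap.range f).subtype ∘
          ![⟨f u, LinearMap.mem_range_self f u⟩, ⟨f v, LinearMap.mem_range_self f v⟩]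
          = ![f u, f v] := by
        funext i; fin_cases i <;> rfl
      rw [this]
      exact hli2
    have := hg.cardinal_le_rank
    rw [Cardinal.mk_fin] at this
    exact_mod_cast this
  have hrk := f.rank_range_add_rank_ker
  rw [hrr, rank_fin_fun] at hrk
  have h4 : ((4:ℕ) : Cardinal) = 2 + 2 := by norm_num
  rw [h4] at hrk
  have hker2 : Module.rank ℤ (LinearMap.ker f) = 2 :=
    Cardinal.eq_of_add_eq_add_left hrk (by exact_mod_cast Cardinal.nat_lt_aleph0 2)
  have hfr : Module.finrank ℤ (LinearMap.ker f) = 2 := by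
    have := Module.finrank_eq_rank ℤ (LinearMap.ker f)
    rw [hker2] at this
    exact_mod_cast this
  exact ⟨(Module.finBasisOfFinrankEq ℤ _ hfr).map (LinearEquiv.ofEq _ _ hker)⟩
/-- if `L` is a primitive rank-2 sublattice of `ℤ⁴` with `ℤ`-basis
`(u,v)` and `u ∧ v = (a,b,c,d,e,f)`, then `L⊥` is free of rank two, and any
`ℤ`-basis `(u′,v′)` of `L⊥` satisfies `u′ ∧ v′ = ±(f,−e,d,c,−b,a)`. -/
theorem perp_free_rank_two_and_wedge (L : Submodule ℤ (Fin 4 → ℤ)) (u v : Fin 4 → ℤ)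
    (hbasis : IsBasisPair L u v) (hprim : IsSaturated L) :
    Nonempty (Module.Basis (Fin 2) ℤ (perp4 u v)) ∧
      ∀ u' v' : Fin 4 → ℤ, IsBasisPair (perp4 u v) u' v' →
        wedge u' v' = rev6 (wedge u v) ∨ wedge u' v' = -rev6 (wedge u v) := by

  obtain ⟨c, hc⟩ := exists_wedge_combo L u v hbasis hprim
  have hwne : wedge u v ≠ 0 := by
    intro h0
    rw [h0] at hc
    simp at hc
  refine ⟨perp4_basis u v hwne, ?_⟩
  intro u' v' hbp'
  obtain ⟨a, ha⟩ := exists_wedge_combo (perp4 u v) u' v' hbp' (perp4_saturated u v)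
  have hu'mem : u' ∈ perp4 u v := by
    rw [← hbp'.2]; exact Submodule.subset_span (by simp)
  have hv'mem : v' ∈ perp4 u v := by
    rw [← hbp'.2]; exact Submodule.subset_span (by simp)
  obtain ⟨hd1, hd2⟩ := hu'mem
  obtain ⟨hd3, hd4⟩ := hv'mem
  have e1 : u' 0 * u 0 + u' 1 * u 1 + u' 2 * u 2 + u' 3 * u 3 = 0 := hd1
  have e2 : u' 0 * v 0 + u' 1 * v 1 + u' 2 * v 2 + u' 3 * v 3 = 0 := hd2
  have e3 : v' 0 * u 0 + v' 1 * u 1 + v' 2 * u 2 + v' 3 * u 3 = 0 := hd3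
  have e4 : v' 0 * v 0 + v' 1 * v 1 + v' 2 * v 2 + v' 3 * v 3 = 0 := hd4
  rw [Fin.sum_univ_six] at hc ha
  have hce : c 0 * (u 0 * v 1 - u 1 * v 0) + c 1 * (u 0 * v 2 - u 2 * v 0) + c 2 * (u 0 * v 3 - u 3 * v 0) + c 3 * (u 1 * v 2 - u 2 * v 1) + c 4 * (u 1 * v 3 - u 3 * v 1) + c 5 * (u 2 * v 3 - u 3 * v 2) = 1 := hc
  have hae : a 0 * (u' 0 * v' 1 - u' 1 * v' 0) + a 1 * (u' 0 * v' 2 - u' 2 * v' 0) + a 2 * (u' 0 * v' 3 - u' 3 * v' 0) + a 3 * (u' 1 * v' 2 - u' 2 * v' 1) + a 4 * (u' 1 * v' 3 - u' 3 * v' 1) + a 5 * (u' 2 * v' 3 - u' 3 * v' 2) = 1 := ha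
  have k01 : (u' 0 * v' 1 - u' 1 * v' 0) * (-(u 1 * v 3 - u 3 * v 1)) = (u' 0 * v' 2 - u' 2 * v' 0) * ((u 2 * v 3 - u 3 * v 2)) := by
    linear_combination v 3 * v' 0 * e1 - u 3 * v' 0 * e2 - v 3 * u' 0 * e3 + u 3 * u' 0 * e4
  have k02 : (u' 0 * v' 1 - u' 1 * v' 0) * ((u 1 * v 2 - u 2 * v 1)) = (u' 0 * v' 3 - u' 3 * v' 0) * ((u 2 * v 3 - u 3 * v 2)) := by
    linear_combination -v 2 * v' 0 * e1 + u 2 * v' 0 * e2 + v 2 * u' 0 * e3 - u 2 * u' 0 * e4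
  have k03 : (u' 0 * v' 1 - u' 1 * v' 0) * ((u 0 * v 3 - u 3 * v 0)) = (u' 1 * v' 2 - u' 2 * v' 1) * ((u 2 * v 3 - u 3 * v 2)) := by
    linear_combination v 3 * v' 1 * e1 - u 3 * v' 1 * e2 - v 3 * u' 1 * e3 + u 3 * u' 1 * e4
  have k04 : (u' 0 * v' 1 - u' 1 * v' 0) * (-(u 0 * v 2 - u 2 * v 0)) = (u' 1 * v' 3 - u' 3 * v' 1) * ((u 2 * v 3 - u 3 * v 2)) := by
    linear_combination -v 2 * v' 1 * e1 + u 2 * v' 1 * e2 + v 2 * u' 1 * e3 - u 2 * u' 1 * e4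
  have k05 : (u' 0 * v' 1 - u' 1 * v' 0) * ((u 0 * v 1 - u 1 * v 0)) = (u' 2 * v' 3 - u' 3 * v' 2) * ((u 2 * v 3 - u 3 * v 2)) := by
    linear_combination -v 2 * v' 2 * e1 - v 3 * v' 3 * e1 + u 2 * v' 2 * e2 + u 3 * v' 3 * e2 - v 0 * u' 0 * e3 - v 1 * u' 1 * e3 + u 0 * u' 0 * e4 + u 1 * u' 1 * e4
  have k12 : (u' 0 * v' 2 - u' 2 * v' 0) * ((u 1 * v 2 - u 2 * v 1)) = (u' 0 * v' 3 - u' 3 * v' 0) * (-(u 1 * v 3 - u 3 * v 1)) := by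
    linear_combination v 1 * v' 0 * e1 - u 1 * v' 0 * e2 - v 1 * u' 0 * e3 + u 1 * u' 0 * e4
  have k13 : (u' 0 * v' 2 - u' 2 * v' 0) * ((u 0 * v 3 - u 3 * v 0)) = (u' 1 * v' 2 - u' 2 * v' 1) * (-(u 1 * v 3 - u 3 * v 1)) := by
    linear_combination v 3 * v' 2 * e1 - u 3 * v' 2 * e2 - v 3 * u' 2 * e3 + u 3 * u' 2 * e4
  have k14 : (u' 0 * v' 2 - u' 2 * v' 0) * (-(u 0 * v 2 - u 2 * v 0)) = (u' 1 * v' 3 - u' 3 * v' 1) * (-(u 1 * v 3 - u 3 * v 1)) := by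
    linear_combination v 1 * v' 1 * e1 + v 3 * v' 3 * e1 - u 1 * v' 1 * e2 - u 3 * v' 3 * e2 + v 0 * u' 0 * e3 + v 2 * u' 2 * e3 - u 0 * u' 0 * e4 - u 2 * u' 2 * e4
  have k15 : (u' 0 * v' 2 - u' 2 * v' 0) * ((u 0 * v 1 - u 1 * v 0)) = (u' 2 * v' 3 - u' 3 * v' 2) * (-(u 1 * v 3 - u 3 * v 1)) := by
    linear_combination v 1 * v' 2 * e1 - u 1 * v' 2 * e2 - v 1 * u' 2 * e3 + u 1 * u' 2 * e4
  have k23 : (u' 0 * v' 3 - u' 3 * v' 0) * ((u 0 * v 3 - u 3 * v 0)) = (u' 1 * v' 2 - u' 2 * v' 1) * ((u 1 * v 2 - u 2 * v 1)) := by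
    linear_combination v 0 * v' 0 * e1 + v 3 * v' 3 * e1 - u 0 * v' 0 * e2 - u 3 * v' 3 * e2 + v 1 * u' 1 * e3 + v 2 * u' 2 * e3 - u 1 * u' 1 * e4 - u 2 * u' 2 * e4
  have k24 : (u' 0 * v' 3 - u' 3 * v' 0) * (-(u 0 * v 2 - u 2 * v 0)) = (u' 1 * v' 3 - u' 3 * v' 1) * ((u 1 * v 2 - u 2 * v 1)) := by
    linear_combination -v 2 * v' 3 * e1 + u 2 * v' 3 * e2 + v 2 * u' 3 * e3 - u 2 * u' 3 * e4
  have k25 : (u' 0 * v' 3 - u' 3 * v' 0) * ((u 0 * v 1 - u 1 * v 0)) = (u' 2 * v' 3 - u' 3 * v' 2) * ((u 1 * v 2 - u 2 * v 1)) := by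
    linear_combination v 1 * v' 3 * e1 - u 1 * v' 3 * e2 - v 1 * u' 3 * e3 + u 1 * u' 3 * e4
  have k34 : (u' 1 * v' 2 - u' 2 * v' 1) * (-(u 0 * v 2 - u 2 * v 0)) = (u' 1 * v' 3 - u' 3 * v' 1) * ((u 0 * v 3 - u 3 * v 0)) := by
    linear_combination -v 0 * v' 1 * e1 + u 0 * v' 1 * e2 + v 0 * u' 1 * e3 - u 0 * u' 1 * e4
  have k35 : (u' 1 * v' 2 - u' 2 * v' 1) * ((u 0 * v 1 - u 1 * v 0)) = (u' 2 * v' 3 - u' 3 * v' 2) * ((u 0 * v 3 - u 3 * v 0)) := by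
    linear_combination -v 0 * v' 2 * e1 + u 0 * v' 2 * e2 + v 0 * u' 2 * e3 - u 0 * u' 2 * e4
  have k45 : (u' 1 * v' 3 - u' 3 * v' 1) * ((u 0 * v 1 - u 1 * v 0)) = (u' 2 * v' 3 - u' 3 * v' 2) * (-(u 0 * v 2 - u 2 * v 0)) := by
    linear_combination -v 0 * v' 3 * e1 + u 0 * v' 3 * e2 + v 0 * u' 3 * e3 - u 0 * u' 3 * e4
  have hq0 : (u' 0 * v' 1 - u' 1 * v' 0) = (c 5 * (u' 0 * v' 1 - u' 1 * v' 0) + -(c 4) * (u' 0 * v' 2 - u' 2 * v' 0) + c 3 * (u' 0 * v' 3 - u' 3 * v' 0) + c 2 * (u' 1 * v' 2 - u' 2 * v' 1) + -(c 1) * (u' 1 * v' 3 - u' 3 * v' 1) + c 0 * (u' 2 * v' 3 - u' 3 * v' 2)) * ((u 2 * v 3 - u 3 * v 2)) := by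
    linear_combination (-(c 4)) * k01 + (c 3) * k02 + (c 2) * k03 + (-(c 1)) * k04 + (c 0) * k05 + (-((u' 0 * v' 1 - u' 1 * v' 0))) * hce
  have hq1 : (u' 0 * v' 2 - u' 2 * v' 0) = (c 5 * (u' 0 * v' 1 - u' 1 * v' 0) + -(c 4) * (u' 0 * v' 2 - u' 2 * v' 0) + c 3 * (u' 0 * v' 3 - u' 3 * v' 0) + c 2 * (u' 1 * v' 2 - u' 2 * v' 1) + -(c 1) * (u' 1 * v' 3 - u' 3 * v' 1) + c 0 * (u' 2 * v' 3 - u' 3 * v' 2)) * (-(u 1 * v 3 - u 3 * v 1)) := by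
    linear_combination (-(c 5)) * k01 + (c 3) * k12 + (c 2) * k13 + (-(c 1)) * k14 + (c 0) * k15 + (-((u' 0 * v' 2 - u' 2 * v' 0))) * hce
  have hq2 : (u' 0 * v' 3 - u' 3 * v' 0) = (c 5 * (u' 0 * v' 1 - u' 1 * v' 0) + -(c 4) * (u' 0 * v' 2 - u' 2 * v' 0) + c 3 * (u' 0 * v' 3 - u' 3 * v' 0) + c 2 * (u' 1 * v' 2 - u' 2 * v' 1) + -(c 1) * (u' 1 * v' 3 - u' 3 * v' 1) + c 0 * (u' 2 * v' 3 - u' 3 * v' 2)) * ((u 1 * v 2 - u 2 * v 1)) := by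
    linear_combination (-(c 5)) * k02 + (-(-(c 4))) * k12 + (c 2) * k23 + (-(c 1)) * k24 + (c 0) * k25 + (-((u' 0 * v' 3 - u' 3 * v' 0))) * hce
  have hq3 : (u' 1 * v' 2 - u' 2 * v' 1) = (c 5 * (u' 0 * v' 1 - u' 1 * v' 0) + -(c 4) * (u' 0 * v' 2 - u' 2 * v' 0) + c 3 * (u' 0 * v' 3 - u' 3 * v' 0) + c 2 * (u' 1 * v' 2 - u' 2 * v' 1) + -(c 1) * (u' 1 * v' 3 - u' 3 * v' 1) + c 0 * (u' 2 * v' 3 - u' 3 * v' 2)) * ((u 0 * v 3 - u 3 * v 0)) := by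
    linear_combination (-(c 5)) * k03 + (-(-(c 4))) * k13 + (-(c 3)) * k23 + (-(c 1)) * k34 + (c 0) * k35 + (-((u' 1 * v' 2 - u' 2 * v' 1))) * hce
  have hq4 : (u' 1 * v' 3 - u' 3 * v' 1) = (c 5 * (u' 0 * v' 1 - u' 1 * v' 0) + -(c 4) * (u' 0 * v' 2 - u' 2 * v' 0) + c 3 * (u' 0 * v' 3 - u' 3 * v' 0) + c 2 * (u' 1 * v' 2 - u' 2 * v' 1) + -(c 1) * (u' 1 * v' 3 - u' 3 * v' 1) + c 0 * (u' 2 * v' 3 - u' 3 * v' 2)) * (-(u 0 * v 2 - u 2 * v 0)) := by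
    linear_combination (-(c 5)) * k04 + (-(-(c 4))) * k14 + (-(c 3)) * k24 + (-(c 2)) * k34 + (c 0) * k45 + (-((u' 1 * v' 3 - u' 3 * v' 1))) * hce
  have hq5 : (u' 2 * v' 3 - u' 3 * v' 2) = (c 5 * (u' 0 * v' 1 - u' 1 * v' 0) + -(c 4) * (u' 0 * v' 2 - u' 2 * v' 0) + c 3 * (u' 0 * v' 3 - u' 3 * v' 0) + c 2 * (u' 1 * v' 2 - u' 2 * v' 1) + -(c 1) * (u' 1 * v' 3 - u' 3 * v' 1) + c 0 * (u' 2 * v' 3 - u' 3 * v' 2)) * ((u 0 * v 1 - u 1 * v 0)) := by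
    linear_combination (-(c 5)) * k05 + (-(-(c 4))) * k15 + (-(c 3)) * k25 + (-(c 2)) * k35 + (-(-(c 1))) * k45 + (-((u' 2 * v' 3 - u' 3 * v' 2))) * hce
  have hmn : (c 5 * (u' 0 * v' 1 - u' 1 * v' 0) + -(c 4) * (u' 0 * v' 2 - u' 2 * v' 0) + c 3 * (u' 0 * v' 3 - u' 3 * v' 0) + c 2 * (u' 1 * v' 2 - u' 2 * v' 1) + -(c 1) * (u' 1 * v' 3 - u' 3 * v' 1) + c 0 * (u' 2 * v' 3 - u' 3 * v' 2)) * (a 0 * ((u 2 * v 3 - u 3 * v 2)) + a 1 * (-(u 1 * v 3 - u 3 * v 1)) + a 2 * ((u 1 * v 2 - u 2 * v 1)) + a 3 * ((u 0 * v 3 - u 3 * v 0)) + a 4 * (-(u 0 * v 2 - u 2 * v 0)) + a 5 * ((u 0 * v 1 - u 1 * v 0))) = 1 := by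
    linear_combination hae - a 0 * hq0 - a 1 * hq1 - a 2 * hq2 - a 3 * hq3 - a 4 * hq4 - a 5 * hq5
  rcases Int.isUnit_iff.1 (IsUnit.of_mul_eq_one _ hmn) with hm | hm
  · refine Or.inl (funext fun j => ?_)
    fin_cases j
    · show (u' 0 * v' 1 - u' 1 * v' 0) = (u 2 * v 3 - u 3 * v 2)
      linear_combination hq0 + ((u 2 * v 3 - u 3 * v 2)) * hm
    · show (u' 0 * v' 2 - u' 2 * v' 0) = -(u 1 * v 3 - u 3 * v 1)
      linear_combination hq1 + (-(u 1 * v 3 - u 3 * v 1)) * hm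
    · show (u' 0 * v' 3 - u' 3 * v' 0) = (u 1 * v 2 - u 2 * v 1)
      linear_combination hq2 + ((u 1 * v 2 - u 2 * v 1)) * hm
    · show (u' 1 * v' 2 - u' 2 * v' 1) = (u 0 * v 3 - u 3 * v 0)
      linear_combination hq3 + ((u 0 * v 3 - u 3 * v 0)) * hm
    · show (u' 1 * v' 3 - u' 3 * v' 1) = -(u 0 * v 2 - u 2 * v 0)
      linear_combination hq4 + (-(u 0 * v 2 - u 2 * v 0)) * hm
    · show (u' 2 * v' 3 - u' 3 * v' 2) = (u 0 * v 1 - u 1 * v 0)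
      linear_combination hq5 + ((u 0 * v 1 - u 1 * v 0)) * hm
  · refine Or.inr (funext fun j => ?_)
    fin_cases j
    · show (u' 0 * v' 1 - u' 1 * v' 0) = -((u 2 * v 3 - u 3 * v 2))
      linear_combination hq0 + ((u 2 * v 3 - u 3 * v 2)) * hm
    · show (u' 0 * v' 2 - u' 2 * v' 0) = -(-(u 1 * v 3 - u 3 * v 1))
      linear_combination hq1 + (-(u 1 * v 3 - u 3 * v 1)) * hm
    · show (u' 0 * v' 3 - u' 3 * v' 0) = -((u 1 * v 2 - u 2 * v 1))
      linear_combination hq2 + ((u 1 * v 2 - u 2 * v 1)) * hm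
    · show (u' 1 * v' 2 - u' 2 * v' 1) = -((u 0 * v 3 - u 3 * v 0))
      linear_combination hq3 + ((u 0 * v 3 - u 3 * v 0)) * hm
    · show (u' 1 * v' 3 - u' 3 * v' 1) = -(-(u 0 * v 2 - u 2 * v 0))
      linear_combination hq4 + (-(u 0 * v 2 - u 2 * v 0)) * hm
    · show (u' 2 * v' 3 - u' 3 * v' 2) = -((u 0 * v 1 - u 1 * v 0))
      linear_combination hq5 + ((u 0 * v 1 - u 1 * v 0)) * hm
end

section
/- Let L be a primitive rank-2 sublattice of ℤ⁴ (identified with the integral Hamilton quaternions) with ℤ-basis (u,v), and let (u′,v′) be a ℤ-basis of L⊥ = {w ∈ ℤ⁴ : w·u = 0 and w·v = 0}. Then (a₁(u′,v′), a₂(u′,v′)) = (a₁(u,v), −a₂(u,v)) or (a₁(u′,v′), a₂(u′,v′)) = (−a₁(u,v), a₂(u,v)). -/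
open scoped Quaternion

/-- The dot product of two integral quaternions viewed as vectors in `ℤ⁴`. -/
def qdot (u v : ℍ[ℤ]) : ℤ :=
  u.re * v.re + u.imI * v.imI + u.imJ * v.imJ + u.imK * v.imK

/-- `a₁(u,v) = u·conj(v) − re(u·conj(v))`. -/
def kleinA1 (u v : ℍ[ℤ]) : ℍ[ℤ] :=
  u * star v - ((u * star v).re : ℍ[ℤ])

/-- `a₂(u,v) = conj(v)·u − re(conj(v)·u)`. -/
def kleinA2 (u v : ℍ[ℤ]) : ℍ[ℤ] :=
  star v * u - ((star v * u).re : ℍ[ℤ])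

/-- `(u, v)` is a `ℤ`-basis of the subgroup `L` of `ℤ⁴ ≃ ℍ(ℤ)`. -/
def IsBasisPairQ (L : Submodule ℤ ℍ[ℤ]) (u v : ℍ[ℤ]) : Prop :=
  LinearIndependent ℤ ![u, v] ∧ Submodule.span ℤ ({u, v} : Set ℍ[ℤ]) = L

/-- `L` is saturated: `(ℚ·L) ∩ ℤ⁴ = L`. -/
def IsSaturatedQ (L : Submodule ℤ ℍ[ℤ]) : Prop :=
  ∀ (n : ℤ) (x : ℍ[ℤ]), n ≠ 0 → n • x ∈ L → x ∈ L

/-- The orthogonal complement `{w : w·u = 0 ∧ w·v = 0}` of the lattice spanned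
by `u` and `v` inside `ℤ⁴ ≃ ℍ(ℤ)`. -/
def qperp (u v : ℍ[ℤ]) : Submodule ℤ ℍ[ℤ] where
  carrier := {w | qdot w u = 0 ∧ qdot w v = 0}
  add_mem' := by
    rintro a b ⟨ha1, ha2⟩ ⟨hb1, hb2⟩
    refine ⟨?_, ?_⟩ <;>
      simp only [qdot, Quaternion.re_add, Quaternion.imI_add,
        Quaternion.imJ_add, Quaternion.imK_add] at *
    · linear_combination ha1 + hb1
    · linear_combination ha2 + hb2
  zero_mem' := by simp [qdot]
  smul_mem' := by
    rintro c a ⟨ha1, ha2⟩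
    refine ⟨?_, ?_⟩ <;>
      simp only [qdot, Quaternion.re_smul, Quaternion.imI_smul,
        Quaternion.imJ_smul, Quaternion.imK_smul, smul_eq_mul] at *
    · linear_combination c * ha1
    · linear_combination c * ha2


theorem klnConsValFive {α : Type*} (a b c d e f : α) : ![a,b,c,d,e,f] (5 : Fin 6) = f := rfl

/-- The six Plücker coordinates of the pair `(u, v)`. -/
def klnPl (u v : ℍ[ℤ]) : Fin 6 → ℤ :=
  ![u.re * v.imI - u.imI * v.re,
    u.re * v.imJ - u.imJ * v.re,
    u.re * v.imK - u.imK * v.re,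
    u.imI * v.imJ - u.imJ * v.imI,
    u.imI * v.imK - u.imK * v.imI,
    u.imJ * v.imK - u.imK * v.imJ]

/-- The Hodge star of the Plücker coordinates of `(u, v)`. -/
def klnQ (u v : ℍ[ℤ]) : Fin 6 → ℤ :=
  ![u.imJ * v.imK - u.imK * v.imJ,
    -(u.imI * v.imK - u.imK * v.imI),
    u.imI * v.imJ - u.imJ * v.imI,
    u.re * v.imK - u.imK * v.re,
    -(u.re * v.imJ - u.imJ * v.re),
    u.re * v.imI - u.imI * v.re]


theorem kln_cross (u v u' v' : ℍ[ℤ]) (h1 : qdot u' u = 0) (h2 : qdot u' v = 0)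
    (h3 : qdot v' u = 0) (h4 : qdot v' v = 0) :
    ∀ i j, klnPl u' v' i * klnQ u v j = klnPl u' v' j * klnQ u v i := by
  simp only [qdot] at h1 h2 h3 h4
  intro i j
  fin_cases i <;> fin_cases j <;>
    simp [klnPl, klnQ, klnConsValFive]
  · linear_combination (v.imK * v'.re) * h1 - (u.imK * v'.re) * h2 - (v.imK * u'.re) * h3 + (u.imK * u'.re) * h4
  · linear_combination -(v.imJ * v'.re) * h1 + (u.imJ * v'.re) * h2 + (v.imJ * u'.re) * h3 - (u.imJ * u'.re) * h4
  · linear_combination (v.imK * v'.imI) * h1 - (u.imK * v'.imI) * h2 - (v.imK * u'.imI) * h3 + (u.imK * u'.imI) * h4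
  · linear_combination -(v.imJ * v'.imI) * h1 + (u.imJ * v'.imI) * h2 + (v.imJ * u'.imI) * h3 - (u.imJ * u'.imI) * h4
  · linear_combination -(v.imJ * v'.imJ) * h1 - (v.imK * v'.imK) * h1 + (u.imJ * v'.imJ) * h2 + (u.imK * v'.imK) * h2 - (v.re * u'.re) * h3 - (v.imI * u'.imI) * h3 + (u.re * u'.re) * h4 + (u.imI * u'.imI) * h4
  · linear_combination -(v.imK * v'.re) * h1 + (u.imK * v'.re) * h2 + (v.imK * u'.re) * h3 - (u.imK * u'.re) * h4
  · linear_combination (v.imI * v'.re) * h1 - (u.imI * v'.re) * h2 - (v.imI * u'.re) * h3 + (u.imI * u'.re) * h4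
  · linear_combination (v.imK * v'.imJ) * h1 - (u.imK * v'.imJ) * h2 - (v.imK * u'.imJ) * h3 + (u.imK * u'.imJ) * h4
  · linear_combination (v.imI * v'.imI) * h1 + (v.imK * v'.imK) * h1 - (u.imI * v'.imI) * h2 - (u.imK * v'.imK) * h2 + (v.re * u'.re) * h3 + (v.imJ * u'.imJ) * h3 - (u.re * u'.re) * h4 - (u.imJ * u'.imJ) * h4
  · linear_combination (v.imI * v'.imJ) * h1 - (u.imI * v'.imJ) * h2 - (v.imI * u'.imJ) * h3 + (u.imI * u'.imJ) * h4
  · linear_combination (v.imJ * v'.re) * h1 - (u.imJ * v'.re) * h2 - (v.imJ * u'.re) * h3 + (u.imJ * u'.re) * h4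
  · linear_combination -(v.imI * v'.re) * h1 + (u.imI * v'.re) * h2 + (v.imI * u'.re) * h3 - (u.imI * u'.re) * h4
  · linear_combination (v.re * v'.re) * h1 + (v.imK * v'.imK) * h1 - (u.re * v'.re) * h2 - (u.imK * v'.imK) * h2 + (v.imI * u'.imI) * h3 + (v.imJ * u'.imJ) * h3 - (u.imI * u'.imI) * h4 - (u.imJ * u'.imJ) * h4
  · linear_combination -(v.imJ * v'.imK) * h1 + (u.imJ * v'.imK) * h2 + (v.imJ * u'.imK) * h3 - (u.imJ * u'.imK) * h4
  · linear_combination (v.imI * v'.imK) * h1 - (u.imI * v'.imK) * h2 - (v.imI * u'.imK) * h3 + (u.imI * u'.imK) * h4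
  · linear_combination -(v.imK * v'.imI) * h1 + (u.imK * v'.imI) * h2 + (v.imK * u'.imI) * h3 - (u.imK * u'.imI) * h4
  · linear_combination -(v.imK * v'.imJ) * h1 + (u.imK * v'.imJ) * h2 + (v.imK * u'.imJ) * h3 - (u.imK * u'.imJ) * h4
  · linear_combination -(v.re * v'.re) * h1 - (v.imK * v'.imK) * h1 + (u.re * v'.re) * h2 + (u.imK * v'.imK) * h2 - (v.imI * u'.imI) * h3 - (v.imJ * u'.imJ) * h3 + (u.imI * u'.imI) * h4 + (u.imJ * u'.imJ) * h4
  · linear_combination -(v.re * v'.imI) * h1 + (u.re * v'.imI) * h2 + (v.re * u'.imI) * h3 - (u.re * u'.imI) * h4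
  · linear_combination -(v.re * v'.imJ) * h1 + (u.re * v'.imJ) * h2 + (v.re * u'.imJ) * h3 - (u.re * u'.imJ) * h4
  · linear_combination (v.imJ * v'.imI) * h1 - (u.imJ * v'.imI) * h2 - (v.imJ * u'.imI) * h3 + (u.imJ * u'.imI) * h4
  · linear_combination -(v.imI * v'.imI) * h1 - (v.imK * v'.imK) * h1 + (u.imI * v'.imI) * h2 + (u.imK * v'.imK) * h2 - (v.re * u'.re) * h3 - (v.imJ * u'.imJ) * h3 + (u.re * u'.re) * h4 + (u.imJ * u'.imJ) * h4
  · linear_combination (v.imJ * v'.imK) * h1 - (u.imJ * v'.imK) * h2 - (v.imJ * u'.imK) * h3 + (u.imJ * u'.imK) * h4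
  · linear_combination (v.re * v'.imI) * h1 - (u.re * v'.imI) * h2 - (v.re * u'.imI) * h3 + (u.re * u'.imI) * h4
  · linear_combination -(v.re * v'.imK) * h1 + (u.re * v'.imK) * h2 + (v.re * u'.imK) * h3 - (u.re * u'.imK) * h4
  · linear_combination (v.imJ * v'.imJ) * h1 + (v.imK * v'.imK) * h1 - (u.imJ * v'.imJ) * h2 - (u.imK * v'.imK) * h2 + (v.re * u'.re) * h3 + (v.imI * u'.imI) * h3 - (u.re * u'.re) * h4 - (u.imI * u'.imI) * h4
  · linear_combination -(v.imI * v'.imJ) * h1 + (u.imI * v'.imJ) * h2 + (v.imI * u'.imJ) * h3 - (u.imI * u'.imJ) * h4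
  · linear_combination -(v.imI * v'.imK) * h1 + (u.imI * v'.imK) * h2 + (v.imI * u'.imK) * h3 - (u.imI * u'.imK) * h4
  · linear_combination (v.re * v'.imJ) * h1 - (u.re * v'.imJ) * h2 - (v.re * u'.imJ) * h3 + (u.re * u'.imJ) * h4
  · linear_combination (v.re * v'.imK) * h1 - (u.re * v'.imK) * h2 - (v.re * u'.imK) * h3 + (u.re * u'.imK) * h4

theorem kln_mem_qperp {u v w : ℍ[ℤ]} :
    w ∈ qperp u v ↔ qdot w u = 0 ∧ qdot w v = 0 := Iff.rfl

/-- If `a • u + b • v` is divisible by `r` in the lattice, then `r ∣ a` and `r ∣ b`. -/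
theorem kln_dvd_ab (L : Submodule ℤ ℍ[ℤ]) {u v : ℍ[ℤ]}
    (hli : ∀ s t : ℤ, s • u + t • v = 0 → s = 0 ∧ t = 0)
    (hu : u ∈ L) (hv : v ∈ L)
    (hspan : ∀ w ∈ L, ∃ m n : ℤ, m • u + n • v = w)
    (hsat : IsSaturatedQ L) (r : ℕ) (hr : r ≠ 0) (a b : ℤ) (w : ℍ[ℤ])
    (hw : a • u + b • v = (r : ℤ) • w) : (r : ℤ) ∣ a ∧ (r : ℤ) ∣ b := by
  have hrz : (r : ℤ) ≠ 0 := Int.natCast_ne_zero.mpr hr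
  have hwL : w ∈ L := by
    refine hsat (r : ℤ) w hrz ?_
    rw [← hw]
    exact Submodule.add_mem L (Submodule.smul_mem L a hu) (Submodule.smul_mem L b hv)
  obtain ⟨m, n, hmn⟩ := hspan w hwL
  have h1 : (r : ℤ) • (m • u + n • v) = a • u + b • v := by rw [hmn, hw]
  have h2 : (a - (r : ℤ) * m) • u + (b - (r : ℤ) * n) • v
      = (a • u + b • v) - (r : ℤ) • (m • u + n • v) := by
    simp only [sub_smul, smul_add, mul_smul]
    abel
  have h0 : (a - (r : ℤ) * m) • u + (b - (r : ℤ) * n) • v = 0 := by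
    rw [h2, h1, sub_self]
  obtain ⟨ha, hb⟩ := hli _ _ h0
  exact ⟨⟨m, by linarith⟩, ⟨n, by linarith⟩⟩

/-- No prime divides all six Plücker coordinates of a basis of a saturated lattice. -/
theorem kln_noprime (L : Submodule ℤ ℍ[ℤ]) {u v : ℍ[ℤ]}
    (hli : ∀ s t : ℤ, s • u + t • v = 0 → s = 0 ∧ t = 0)
    (hu : u ∈ L) (hv : v ∈ L)
    (hspan : ∀ w ∈ L, ∃ m n : ℤ, m • u + n • v = w)
    (hsat : IsSaturatedQ L) (r : ℕ) (hr : r.Prime)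
    (hdvd : ∀ i : Fin 6, (r : ℤ) ∣ klnPl u v i) : False := by
  have d0 : (r : ℤ) ∣ u.re * v.imI - u.imI * v.re := hdvd 0
  have d1 : (r : ℤ) ∣ u.re * v.imJ - u.imJ * v.re := hdvd 1
  have d2 : (r : ℤ) ∣ u.re * v.imK - u.imK * v.re := hdvd 2
  have d3 : (r : ℤ) ∣ u.imI * v.imJ - u.imJ * v.imI := hdvd 3
  have d4 : (r : ℤ) ∣ u.imI * v.imK - u.imK * v.imI := hdvd 4
  have d5 : (r : ℤ) ∣ u.imJ * v.imK - u.imK * v.imJ := hdvd 5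
  have hrne : r ≠ 0 := hr.ne_zero
  by_cases h0 : (r : ℤ) ∣ u.re
  · by_cases h1 : (r : ℤ) ∣ u.imI
    · by_cases h2 : (r : ℤ) ∣ u.imJ
      · by_cases h3 : (r : ℤ) ∣ u.imK
        · -- all coordinates of u divisible by r
          obtain ⟨c0, e0⟩ := h0
          obtain ⟨c1, e1⟩ := h1
          obtain ⟨c2, e2⟩ := h2
          obtain ⟨c3, e3⟩ := h3
          have key := kln_dvd_ab L hli hu hv hspan hsat r hrne 1 0
            (⟨c0, c1, c2, c3⟩ : ℍ[ℤ])
            (by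
              rw [Quaternion.ext_iff]
              refine ⟨?_, ?_, ?_, ?_⟩ <;> simp
              · erw [Quaternion.re_smul, smul_eq_mul]; linear_combination e0
              · erw [Quaternion.imI_smul, smul_eq_mul]; linear_combination e1
              · erw [Quaternion.imJ_smul, smul_eq_mul]; linear_combination e2
              · erw [Quaternion.imK_smul, smul_eq_mul]; linear_combination e3)
          have h1' : (r : ℤ) = 1 := Int.eq_one_of_dvd_one (by positivity) key.1
          have : r = 1 := by exact_mod_cast h1'
          exact hr.ne_one this
        · -- r does not divide u.imK  (c = 3)
          obtain ⟨k2, f2⟩ := d2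
          obtain ⟨k4, f4⟩ := d4
          obtain ⟨k5, f5⟩ := d5
          have key := kln_dvd_ab L hli hu hv hspan hsat r hrne v.imK (-u.imK)
            (⟨k2, k4, k5, 0⟩ : ℍ[ℤ])
            (by
              rw [Quaternion.ext_iff]
              refine ⟨?_, ?_, ?_, ?_⟩ <;> simp
              · erw [Quaternion.re_smul, smul_eq_mul]; linear_combination f2
              · erw [Quaternion.imI_smul, smul_eq_mul]; linear_combination f4
              · erw [Quaternion.imJ_smul, smul_eq_mul]; linear_combination f5
              · erw [Quaternion.imK_smul, smul_eq_mul]; ring)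
          exact h3 (dvd_neg.mp key.2)
      · -- r does not divide u.imJ  (c = 2)
        obtain ⟨k1, f1⟩ := d1
        obtain ⟨k3, f3⟩ := d3
        obtain ⟨k5, f5⟩ := d5
        have key := kln_dvd_ab L hli hu hv hspan hsat r hrne v.imJ (-u.imJ)
          (⟨k1, k3, 0, -k5⟩ : ℍ[ℤ])
          (by
              rw [Quaternion.ext_iff]
              refine ⟨?_, ?_, ?_, ?_⟩ <;> simp
              · erw [Quaternion.re_smul, smul_eq_mul]; linear_combination f1
              · erw [Quaternion.imI_smul, smul_eq_mul]; linear_combination f3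
              · erw [Quaternion.imJ_smul, smul_eq_mul]; ring
              · erw [Quaternion.imK_smul, smul_eq_mul]; linear_combination -f5)
        exact h2 (dvd_neg.mp key.2)
    · -- r does not divide u.imI  (c = 1)
      obtain ⟨k0, f0⟩ := d0
      obtain ⟨k3, f3⟩ := d3
      obtain ⟨k4, f4⟩ := d4
      have key := kln_dvd_ab L hli hu hv hspan hsat r hrne v.imI (-u.imI)
        (⟨k0, 0, -k3, -k4⟩ : ℍ[ℤ])
        (by
              rw [Quaternion.ext_iff]
              refine ⟨?_, ?_, ?_, ?_⟩ <;> simp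
              · erw [Quaternion.re_smul, smul_eq_mul]; linear_combination f0
              · erw [Quaternion.imI_smul, smul_eq_mul]; ring
              · erw [Quaternion.imJ_smul, smul_eq_mul]; linear_combination -f3
              · erw [Quaternion.imK_smul, smul_eq_mul]; linear_combination -f4)
      exact h1 (dvd_neg.mp key.2)
  · -- r does not divide u.re  (c = 0)
    obtain ⟨k0, f0⟩ := d0
    obtain ⟨k1, f1⟩ := d1
    obtain ⟨k2, f2⟩ := d2
    have key := kln_dvd_ab L hli hu hv hspan hsat r hrne v.re (-u.re)
      (⟨0, -k0, -k1, -k2⟩ : ℍ[ℤ])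
      (by
              rw [Quaternion.ext_iff]
              refine ⟨?_, ?_, ?_, ?_⟩ <;> simp
              · erw [Quaternion.re_smul, smul_eq_mul]; ring
              · erw [Quaternion.imI_smul, smul_eq_mul]; linear_combination -f0
              · erw [Quaternion.imJ_smul, smul_eq_mul]; linear_combination -f1
              · erw [Quaternion.imK_smul, smul_eq_mul]; linear_combination -f2)
    exact h0 (dvd_neg.mp key.2)

/-- The Plücker coordinates of a basis of a saturated lattice are coprime. -/
theorem kln_gcd_one (L : Submodule ℤ ℍ[ℤ]) {u v : ℍ[ℤ]}
    (hli : ∀ s t : ℤ, s • u + t • v = 0 → s = 0 ∧ t = 0)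
    (hu : u ∈ L) (hv : v ∈ L)
    (hspan : ∀ w ∈ L, ∃ m n : ℤ, m • u + n • v = w)
    (hsat : IsSaturatedQ L) :
    Finset.univ.gcd (klnPl u v) = 1 := by
  by_contra hg
  set g := Finset.univ.gcd (klnPl u v) with hgdef
  have hne : g.natAbs ≠ 1 := by
    intro h1
    have h2 := Int.natAbs_eq g
    rw [h1] at h2
    rcases h2 with h | h
    · exact hg (by exact_mod_cast h)
    · have hn : normalize g = g := Finset.normalize_gcd
      have h' : g = -1 := by exact_mod_cast h
      rw [h', show normalize (-1 : ℤ) = 1 from rfl] at hn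
      exact absurd hn (by decide)
  have hrp : g.natAbs.minFac.Prime := Nat.minFac_prime hne
  have hdvd : ∀ i : Fin 6, ((g.natAbs.minFac : ℕ) : ℤ) ∣ klnPl u v i := by
    intro i
    have ha : ((g.natAbs : ℕ) : ℤ) ∣ klnPl u v i :=
      Int.natAbs_dvd.mpr (Finset.gcd_dvd (Finset.mem_univ i))
    exact dvd_trans (Int.natCast_dvd_natCast.mpr (Nat.minFac_dvd _)) ha
  exact kln_noprime L hli hu hv hspan hsat _ hrp hdvd

/-- The Hodge star has the same (unit) gcd. -/
theorem kln_gcdQ (u v : ℍ[ℤ]) (hg : Finset.univ.gcd (klnPl u v) = 1) :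
    Finset.univ.gcd (klnQ u v) = 1 := by
  have hdvd : Finset.univ.gcd (klnQ u v) ∣ 1 := by
    rw [← hg]
    refine Finset.dvd_gcd fun i _ => ?_
    fin_cases i
    · show Finset.univ.gcd (klnQ u v) ∣ klnPl u v (0 : Fin 6)
      rw [show klnPl u v (0 : Fin 6) = klnQ u v (5 : Fin 6) by
        simp [klnPl, klnQ, klnConsValFive]]
      exact Finset.gcd_dvd (Finset.mem_univ _)
    · show Finset.univ.gcd (klnQ u v) ∣ klnPl u v (1 : Fin 6)
      rw [show klnPl u v (1 : Fin 6) = -klnQ u v (4 : Fin 6) by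
        simp [klnPl, klnQ, klnConsValFive]]
      exact dvd_neg.mpr (Finset.gcd_dvd (Finset.mem_univ _))
    · show Finset.univ.gcd (klnQ u v) ∣ klnPl u v (2 : Fin 6)
      rw [show klnPl u v (2 : Fin 6) = klnQ u v (3 : Fin 6) by
        simp [klnPl, klnQ, klnConsValFive]]
      exact Finset.gcd_dvd (Finset.mem_univ _)
    · show Finset.univ.gcd (klnQ u v) ∣ klnPl u v (3 : Fin 6)
      rw [show klnPl u v (3 : Fin 6) = klnQ u v (2 : Fin 6) by
        simp [klnPl, klnQ, klnConsValFive]]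
      exact Finset.gcd_dvd (Finset.mem_univ _)
    · show Finset.univ.gcd (klnQ u v) ∣ klnPl u v (4 : Fin 6)
      rw [show klnPl u v (4 : Fin 6) = -klnQ u v (1 : Fin 6) by
        simp [klnPl, klnQ, klnConsValFive]]
      exact dvd_neg.mpr (Finset.gcd_dvd (Finset.mem_univ _))
    · show Finset.univ.gcd (klnQ u v) ∣ klnPl u v (5 : Fin 6)
      rw [show klnPl u v (5 : Fin 6) = klnQ u v (0 : Fin 6) by
        simp [klnPl, klnQ, klnConsValFive]]
      exact Finset.gcd_dvd (Finset.mem_univ _)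
  rcases Int.isUnit_iff.mp (isUnit_of_dvd_one hdvd) with h | h
  · exact h
  · exfalso
    have hn : normalize (Finset.univ.gcd (klnQ u v)) = Finset.univ.gcd (klnQ u v) :=
      Finset.normalize_gcd
    rw [h, show normalize (-1 : ℤ) = 1 from rfl] at hn
    exact absurd hn (by decide)

/-- Two coprime integer vectors with proportional coordinates agree up to sign. -/
theorem kln_prop_pm (a b : Fin 6 → ℤ) (h : ∀ i j, a i * b j = a j * b i)
    (ha : Finset.univ.gcd a = 1) (hb : Finset.univ.gcd b = 1) :
    a = b ∨ a = -b := by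
  have hbne : ∃ i, b i ≠ 0 := by
    by_contra hc
    push_neg at hc
    rw [Finset.gcd_eq_zero_iff.mpr (fun x _ => hc x)] at hb
    exact absurd hb (by decide)
  obtain ⟨i, hbi⟩ := hbne
  have hba : b i ∣ a i := by
    have h1 : b i ∣ Finset.univ.gcd (fun j => a i * b j) :=
      Finset.dvd_gcd (fun j _ => ⟨a j, by linear_combination h i j⟩)
    rw [Finset.gcd_mul_left, hb, mul_one] at h1
    exact dvd_normalize_iff.mp h1
  have hab : a i ∣ b i := by
    have h2 : a i ∣ Finset.univ.gcd (fun j => b i * a j) :=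
      Finset.dvd_gcd (fun j _ => ⟨b j, by linear_combination -h i j⟩)
    rw [Finset.gcd_mul_left, ha, mul_one] at h2
    exact dvd_normalize_iff.mp h2
  rcases Int.associated_iff.mp (associated_of_dvd_dvd hab hba) with he | he
  · left
    funext j
    have key : b i * a j = b i * b j := by linear_combination -h i j + b j * he
    exact mul_left_cancel₀ hbi key
  · right
    funext j
    simp only [Pi.neg_apply]
    have key : b i * a j = b i * (-b j) := by linear_combination -h i j + b j * he
    exact mul_left_cancel₀ hbi key

/-- if `L` is a primitive rank-2 sublattice of `ℤ⁴ ≃ ℍ(ℤ)` with basis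
`(u,v)` and `(u′,v′)` is a basis of `L⊥`, then
`(a₁(u′,v′), a₂(u′,v′)) = (a₁(u,v), −a₂(u,v))` or `(−a₁(u,v), a₂(u,v))`. -/
theorem klein_of_perp (L : Submodule ℤ ℍ[ℤ]) (u v u' v' : ℍ[ℤ])
    (hbasis : IsBasisPairQ L u v) (hprim : IsSaturatedQ L)
    (hbasis' : IsBasisPairQ (qperp u v) u' v') :
    (kleinA1 u' v', kleinA2 u' v') = (kleinA1 u v, -kleinA2 u v) ∨
      (kleinA1 u' v', kleinA2 u' v') = (-kleinA1 u v, kleinA2 u v) := by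
  obtain ⟨hli, hspan⟩ := hbasis
  obtain ⟨hli', hspan'⟩ := hbasis'
  rw [LinearIndependent.pair_iff] at hli hli'
  have hu : u ∈ L := by rw [← hspan]; exact Submodule.subset_span (by simp)
  have hv : v ∈ L := by rw [← hspan]; exact Submodule.subset_span (by simp)
  have hu' : u' ∈ qperp u v := by rw [← hspan']; exact Submodule.subset_span (by simp)
  have hv' : v' ∈ qperp u v := by rw [← hspan']; exact Submodule.subset_span (by simp)
  obtain ⟨h1, h2⟩ := kln_mem_qperp.mp hu'
  obtain ⟨h3, h4⟩ := kln_mem_qperp.mp hv'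
  have hqd : ∀ (n : ℤ) (x y : ℍ[ℤ]), qdot (n • x) y = n * qdot x y := by
    intro n x y
    simp only [qdot, Quaternion.re_smul, Quaternion.imI_smul, Quaternion.imJ_smul,
      Quaternion.imK_smul, smul_eq_mul]
    ring
  have hsat' : IsSaturatedQ (qperp u v) := by
    intro n x hn hx
    obtain ⟨hx1, hx2⟩ := kln_mem_qperp.mp hx
    rw [hqd] at hx1 hx2
    exact kln_mem_qperp.mpr ⟨(mul_eq_zero.mp hx1).resolve_left hn,
      (mul_eq_zero.mp hx2).resolve_left hn⟩
  have hspanL : ∀ w ∈ L, ∃ m n : ℤ, m • u + n • v = w := by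
    intro w hw
    rw [← hspan] at hw
    exact Submodule.mem_span_pair.mp hw
  have hspanP : ∀ w ∈ qperp u v, ∃ m n : ℤ, m • u' + n • v' = w := by
    intro w hw
    rw [← hspan'] at hw
    exact Submodule.mem_span_pair.mp hw
  have hg : Finset.univ.gcd (klnPl u v) = 1 := kln_gcd_one L hli hu hv hspanL hprim
  have hg' : Finset.univ.gcd (klnPl u' v') = 1 :=
    kln_gcd_one (qperp u v) hli' hu' hv' hspanP hsat'
  have hgq : Finset.univ.gcd (klnQ u v) = 1 := kln_gcdQ u v hg
  have hcross := kln_cross u v u' v' h1 h2 h3 h4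
  rcases kln_prop_pm _ _ hcross hg' hgq with h | h
  · left
    have E0 : u'.re * v'.imI - u'.imI * v'.re = u.imJ * v.imK - u.imK * v.imJ :=
      congrFun h 0
    have E1 : u'.re * v'.imJ - u'.imJ * v'.re = -(u.imI * v.imK - u.imK * v.imI) :=
      congrFun h 1
    have E2 : u'.re * v'.imK - u'.imK * v'.re = u.imI * v.imJ - u.imJ * v.imI :=
      congrFun h 2
    have E3 : u'.imI * v'.imJ - u'.imJ * v'.imI = u.re * v.imK - u.imK * v.re :=
      congrFun h 3
    have E4 : u'.imI * v'.imK - u'.imK * v'.imI = -(u.re * v.imJ - u.imJ * v.re) :=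
      congrFun h 4
    have E5 : u'.imJ * v'.imK - u'.imK * v'.imJ = u.re * v.imI - u.imI * v.re :=
      congrFun h 5
    simp only [Prod.mk.injEq]
    constructor
    · rw [Quaternion.ext_iff]
      refine ⟨by simp [kleinA1, kleinA2], ?_, ?_, ?_⟩
      · simp only [kleinA1, kleinA2, Quaternion.re_sub, Quaternion.imI_sub, Quaternion.imJ_sub,
          Quaternion.imK_sub, Quaternion.re_neg, Quaternion.imI_neg, Quaternion.imJ_neg,
          Quaternion.imK_neg, Quaternion.re_coe, Quaternion.imI_coe, Quaternion.imJ_coe,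
          Quaternion.imK_coe, Quaternion.re_intCast, Quaternion.imI_intCast,
          Quaternion.imJ_intCast, Quaternion.imK_intCast, Quaternion.re_mul, Quaternion.imI_mul, Quaternion.imJ_mul,
          Quaternion.imK_mul, Quaternion.re_star, Quaternion.imI_star, Quaternion.imJ_star,
          Quaternion.imK_star]
        linear_combination -E0 - E5
      · simp only [kleinA1, kleinA2, Quaternion.re_sub, Quaternion.imI_sub, Quaternion.imJ_sub,
          Quaternion.imK_sub, Quaternion.re_neg, Quaternion.imI_neg, Quaternion.imJ_neg,
          Quaternion.imK_neg, Quaternion.re_coe, Quaternion.imI_coe, Quaternion.imJ_coe,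
          Quaternion.imK_coe, Quaternion.re_intCast, Quaternion.imI_intCast,
          Quaternion.imJ_intCast, Quaternion.imK_intCast, Quaternion.re_mul, Quaternion.imI_mul, Quaternion.imJ_mul,
          Quaternion.imK_mul, Quaternion.re_star, Quaternion.imI_star, Quaternion.imJ_star,
          Quaternion.imK_star]
        linear_combination -E1 + E4
      · simp only [kleinA1, kleinA2, Quaternion.re_sub, Quaternion.imI_sub, Quaternion.imJ_sub,
          Quaternion.imK_sub, Quaternion.re_neg, Quaternion.imI_neg, Quaternion.imJ_neg,
          Quaternion.imK_neg, Quaternion.re_coe, Quaternion.imI_coe, Quaternion.imJ_coe,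
          Quaternion.imK_coe, Quaternion.re_intCast, Quaternion.imI_intCast,
          Quaternion.imJ_intCast, Quaternion.imK_intCast, Quaternion.re_mul, Quaternion.imI_mul, Quaternion.imJ_mul,
          Quaternion.imK_mul, Quaternion.re_star, Quaternion.imI_star, Quaternion.imJ_star,
          Quaternion.imK_star]
        linear_combination -E2 - E3
    · rw [Quaternion.ext_iff]
      refine ⟨by simp [kleinA1, kleinA2], ?_, ?_, ?_⟩
      · simp only [kleinA1, kleinA2, Quaternion.re_sub, Quaternion.imI_sub, Quaternion.imJ_sub,
          Quaternion.imK_sub, Quaternion.re_neg, Quaternion.imI_neg, Quaternion.imJ_neg,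
          Quaternion.imK_neg, Quaternion.re_coe, Quaternion.imI_coe, Quaternion.imJ_coe,
          Quaternion.imK_coe, Quaternion.re_intCast, Quaternion.imI_intCast,
          Quaternion.imJ_intCast, Quaternion.imK_intCast, Quaternion.re_mul, Quaternion.imI_mul, Quaternion.imJ_mul,
          Quaternion.imK_mul, Quaternion.re_star, Quaternion.imI_star, Quaternion.imJ_star,
          Quaternion.imK_star]
        linear_combination -E0 + E5
      · simp only [kleinA1, kleinA2, Quaternion.re_sub, Quaternion.imI_sub, Quaternion.imJ_sub,
          Quaternion.imK_sub, Quaternion.re_neg, Quaternion.imI_neg, Quaternion.imJ_neg,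
          Quaternion.imK_neg, Quaternion.re_coe, Quaternion.imI_coe, Quaternion.imJ_coe,
          Quaternion.imK_coe, Quaternion.re_intCast, Quaternion.imI_intCast,
          Quaternion.imJ_intCast, Quaternion.imK_intCast, Quaternion.re_mul, Quaternion.imI_mul, Quaternion.imJ_mul,
          Quaternion.imK_mul, Quaternion.re_star, Quaternion.imI_star, Quaternion.imJ_star,
          Quaternion.imK_star]
        linear_combination -E1 - E4
      · simp only [kleinA1, kleinA2, Quaternion.re_sub, Quaternion.imI_sub, Quaternion.imJ_sub,
          Quaternion.imK_sub, Quaternion.re_neg, Quaternion.imI_neg, Quaternion.imJ_neg,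
          Quaternion.imK_neg, Quaternion.re_coe, Quaternion.imI_coe, Quaternion.imJ_coe,
          Quaternion.imK_coe, Quaternion.re_intCast, Quaternion.imI_intCast,
          Quaternion.imJ_intCast, Quaternion.imK_intCast, Quaternion.re_mul, Quaternion.imI_mul, Quaternion.imJ_mul,
          Quaternion.imK_mul, Quaternion.re_star, Quaternion.imI_star, Quaternion.imJ_star,
          Quaternion.imK_star]
        linear_combination -E2 + E3
  · right
    have E0 : u'.re * v'.imI - u'.imI * v'.re = -(u.imJ * v.imK - u.imK * v.imJ) :=
      congrFun h 0
    have E1 : u'.re * v'.imJ - u'.imJ * v'.re = -(-(u.imI * v.imK - u.imK * v.imI)) :=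
      congrFun h 1
    have E2 : u'.re * v'.imK - u'.imK * v'.re = -(u.imI * v.imJ - u.imJ * v.imI) :=
      congrFun h 2
    have E3 : u'.imI * v'.imJ - u'.imJ * v'.imI = -(u.re * v.imK - u.imK * v.re) :=
      congrFun h 3
    have E4 : u'.imI * v'.imK - u'.imK * v'.imI = -(-(u.re * v.imJ - u.imJ * v.re)) :=
      congrFun h 4
    have E5 : u'.imJ * v'.imK - u'.imK * v'.imJ = -(u.re * v.imI - u.imI * v.re) :=
      congrFun h 5
    simp only [Prod.mk.injEq]
    constructor
    · rw [Quaternion.ext_iff]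
      refine ⟨by simp [kleinA1, kleinA2], ?_, ?_, ?_⟩
      · simp only [kleinA1, kleinA2, Quaternion.re_sub, Quaternion.imI_sub, Quaternion.imJ_sub,
          Quaternion.imK_sub, Quaternion.re_neg, Quaternion.imI_neg, Quaternion.imJ_neg,
          Quaternion.imK_neg, Quaternion.re_coe, Quaternion.imI_coe, Quaternion.imJ_coe,
          Quaternion.imK_coe, Quaternion.re_intCast, Quaternion.imI_intCast,
          Quaternion.imJ_intCast, Quaternion.imK_intCast, Quaternion.re_mul, Quaternion.imI_mul, Quaternion.imJ_mul,
          Quaternion.imK_mul, Quaternion.re_star, Quaternion.imI_star, Quaternion.imJ_star,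
          Quaternion.imK_star]
        linear_combination -E0 - E5
      · simp only [kleinA1, kleinA2, Quaternion.re_sub, Quaternion.imI_sub, Quaternion.imJ_sub,
          Quaternion.imK_sub, Quaternion.re_neg, Quaternion.imI_neg, Quaternion.imJ_neg,
          Quaternion.imK_neg, Quaternion.re_coe, Quaternion.imI_coe, Quaternion.imJ_coe,
          Quaternion.imK_coe, Quaternion.re_intCast, Quaternion.imI_intCast,
          Quaternion.imJ_intCast, Quaternion.imK_intCast, Quaternion.re_mul, Quaternion.imI_mul, Quaternion.imJ_mul,
          Quaternion.imK_mul, Quaternion.re_star, Quaternion.imI_star, Quaternion.imJ_star,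
          Quaternion.imK_star]
        linear_combination -E1 + E4
      · simp only [kleinA1, kleinA2, Quaternion.re_sub, Quaternion.imI_sub, Quaternion.imJ_sub,
          Quaternion.imK_sub, Quaternion.re_neg, Quaternion.imI_neg, Quaternion.imJ_neg,
          Quaternion.imK_neg, Quaternion.re_coe, Quaternion.imI_coe, Quaternion.imJ_coe,
          Quaternion.imK_coe, Quaternion.re_intCast, Quaternion.imI_intCast,
          Quaternion.imJ_intCast, Quaternion.imK_intCast, Quaternion.re_mul, Quaternion.imI_mul, Quaternion.imJ_mul,
          Quaternion.imK_mul, Quaternion.re_star, Quaternion.imI_star, Quaternion.imJ_star,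
          Quaternion.imK_star]
        linear_combination -E2 - E3
    · rw [Quaternion.ext_iff]
      refine ⟨by simp [kleinA1, kleinA2], ?_, ?_, ?_⟩
      · simp only [kleinA1, kleinA2, Quaternion.re_sub, Quaternion.imI_sub, Quaternion.imJ_sub,
          Quaternion.imK_sub, Quaternion.re_neg, Quaternion.imI_neg, Quaternion.imJ_neg,
          Quaternion.imK_neg, Quaternion.re_coe, Quaternion.imI_coe, Quaternion.imJ_coe,
          Quaternion.imK_coe, Quaternion.re_intCast, Quaternion.imI_intCast,
          Quaternion.imJ_intCast, Quaternion.imK_intCast, Quaternion.re_mul, Quaternion.imI_mul, Quaternion.imJ_mul,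
          Quaternion.imK_mul, Quaternion.re_star, Quaternion.imI_star, Quaternion.imJ_star,
          Quaternion.imK_star]
        linear_combination -E0 + E5
      · simp only [kleinA1, kleinA2, Quaternion.re_sub, Quaternion.imI_sub, Quaternion.imJ_sub,
          Quaternion.imK_sub, Quaternion.re_neg, Quaternion.imI_neg, Quaternion.imJ_neg,
          Quaternion.imK_neg, Quaternion.re_coe, Quaternion.imI_coe, Quaternion.imJ_coe,
          Quaternion.imK_coe, Quaternion.re_intCast, Quaternion.imI_intCast,
          Quaternion.imJ_intCast, Quaternion.imK_intCast, Quaternion.re_mul, Quaternion.imI_mul, Quaternion.imJ_mul,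
          Quaternion.imK_mul, Quaternion.re_star, Quaternion.imI_star, Quaternion.imJ_star,
          Quaternion.imK_star]
        linear_combination -E1 - E4
      · simp only [kleinA1, kleinA2, Quaternion.re_sub, Quaternion.imI_sub, Quaternion.imJ_sub,
          Quaternion.imK_sub, Quaternion.re_neg, Quaternion.imI_neg, Quaternion.imJ_neg,
          Quaternion.imK_neg, Quaternion.re_coe, Quaternion.imI_coe, Quaternion.imJ_coe,
          Quaternion.imK_coe, Quaternion.re_intCast, Quaternion.imI_intCast,
          Quaternion.imJ_intCast, Quaternion.imK_intCast, Quaternion.re_mul, Quaternion.imI_mul, Quaternion.imJ_mul,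
          Quaternion.imK_mul, Quaternion.re_star, Quaternion.imI_star, Quaternion.imJ_star,
          Quaternion.imK_star]
        linear_combination -E2 + E3
end
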